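/- Let Ω ⊆ ℝ^N be a domain, r ∈ [1, ∞), and let (u_n) be a bounded sequence in L^r(Ω). If u_n → u almost everywhere on Ω as n → ∞, then for every q ∈ [1, r], lim_{n → ∞} ∫_Ω | |u_n|^q − |u_n − u|^q − |u|^q |^{r/q} = 0. -/

import Mathlib

open MeasureTheory Real Filter Topology Metric Set
open scoped ENNReal RealInnerProductSpace

noncomputable section

abbrev Euc (N : ℕ) := EuclideanSpace ℝ (Fin N)

/-- The Riesz potential `I_α` on `ℝ^N`. -/
def rieszPot (N : ℕ) (α : ℝ) (x : Euc N) : ℝ :=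
  Real.Gamma (((N : ℝ) - α) / 2) /
    (Real.Gamma (α / 2) * Real.pi ^ ((N : ℝ) / 2) * (2 : ℝ) ^ α * ‖x‖ ^ ((N : ℝ) - α))

/-- Convolution with the Riesz potential. -/
def rieszConv (N : ℕ) (α : ℝ) (f : Euc N → ℝ) (x : Euc N) : ℝ :=
  ∫ y, rieszPot N α (x - y) * f y

/-- The nonlocal term `∫ (I_α ∗ |u|^p) |u|^p`. -/
def nonlocTerm (N : ℕ) (α p : ℝ) (u : Euc N → ℝ) : ℝ :=
  ∫ x, rieszConv N α (fun y => |u y| ^ p) x * |u x| ^ p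

/-- `du` is the distributional gradient of `u`. -/
def HasWeakGradient {N : ℕ} (u : Euc N → ℝ) (du : Euc N → Euc N) : Prop :=
  ∀ φ : Euc N → ℝ, ContDiff ℝ (⊤ : ℕ∞) φ → HasCompactSupport φ →
    ∫ x, u x • gradient φ x = - ∫ x, φ x • du x

/-- `u ∈ W^{1,2}(ℝ^N)` with distributional gradient `du`. -/
structure MemW12 {N : ℕ} (u : Euc N → ℝ) (du : Euc N → Euc N) : Prop where
  memLp_u : MemLp u 2 (volume : Measure (Euc N))
  memLp_du : MemLp du 2 (volume : Measure (Euc N))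
  weak : HasWeakGradient u du

/-- `u` is a weak solution of the Choquard equation `-Δu + u = (I_α ∗ |u|^p)|u|^{p-2}u`. -/
def IsWeakSolution (N : ℕ) (α p : ℝ) (u : Euc N → ℝ) (du : Euc N → Euc N) : Prop :=
  ∀ φ : Euc N → ℝ, ContDiff ℝ (⊤ : ℕ∞) φ → HasCompactSupport φ →
    ∫ x, ((inner ℝ (du x) (gradient φ x) : ℝ) + u x * φ x) =
      ∫ x, rieszConv N α (fun y => |u y| ^ p) x * |u x| ^ (p - 2) * u x * φ x

/-- The energy functional `E_{α,p}`. -/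
def chEnergy (N : ℕ) (α p : ℝ) (u : Euc N → ℝ) (du : Euc N → Euc N) : ℝ :=
  (1 / 2) * (∫ x, (‖du x‖ ^ 2 + (u x) ^ 2)) - (1 / (2 * p)) * nonlocTerm N α p u

/-- The Nehari constraint. -/
def Nehari (N : ℕ) (α p : ℝ) (v : Euc N → ℝ) (dv : Euc N → Euc N) : Prop :=
  (∫ x, (‖dv x‖ ^ 2 + (v x) ^ 2)) = nonlocTerm N α p v

/-- Energies of nontrivial `W^{1,2}` functions on the Nehari constraint. -/
def groundEnergies (N : ℕ) (α p : ℝ) : Set ℝ :=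
  { e | ∃ v dv, MemW12 v dv ∧ ¬ (v =ᵐ[(volume : Measure (Euc N))] 0) ∧
        Nehari N α p v dv ∧ e = chEnergy N α p v dv }

/-- `u` is a groundstate of the Choquard equation. -/
def IsGroundstate (N : ℕ) (α p : ℝ) (u : Euc N → ℝ) (du : Euc N → Euc N) : Prop :=
  MemW12 u du ∧ IsWeakSolution N α p u du ∧
    chEnergy N α p u du = sInf (groundEnergies N α p)

/-!
The key estimate is pointwise: for every `ε > 0` there is `C` with
`||a + b|^q - |a|^q - |b|^q|^(r/q) ≤ ε |a|^r + C |b|^r`.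
With `a = u n - v` and `b = v`, the positive part of the integrand minus `ε |u n - v|^r` is
dominated by `C |v|^r` and tends to `0` a.e., so by dominated convergence the integrals are
eventually at most `ε sup_n ‖u n - v‖_r^r + o(1)`; that supremum is finite because `v ∈ L^r`
by Fatou's lemma.
-/

namespace Real

lemma rpow_add_le_mul_rpow_add_rpow {a b p : ℝ} (ha : 0 ≤ a) (hb : 0 ≤ b) (hp : 1 ≤ p) :
    (a + b) ^ p ≤ 2 ^ (p - 1) * (a ^ p + b ^ p) := by
  lift a to NNReal using ha
  lift b to NNReal using hb
  exact_mod_cast NNReal.rpow_add_le_mul_rpow_add_rpow a b hp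

end Real

/-- When `|b| ≤ δ |a|`, homogeneity reduces the estimate to continuity of `t ↦ |1 + t| ^ q`
at `0`; otherwise `|a|` and `|a + b|` are both `O(|b|)`. -/
lemma exists_abs_rpow_add_sub_rpow_le {q : ℝ} (hq : 0 < q) {ε : ℝ} (hε : 0 < ε) :
    ∃ C, 0 ≤ C ∧ ∀ a b : ℝ, |(|a + b| ^ q - |a| ^ q)| ≤ ε * |a| ^ q + C * |b| ^ q := by
  have hcont : ContinuousAt (fun t : ℝ => |1 + t| ^ q) 0 := by fun_prop (disch := positivity)
  obtain ⟨δ, hδ, hδε⟩ := Metric.continuousAt_iff.mp hcont ε hε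
  refine ⟨(2 / δ + 1) ^ q + (2 / δ) ^ q, by positivity, fun a b => ?_⟩
  rcases le_or_gt |b| (δ / 2 * |a|) with hsmall | hlarge
  · rcases eq_or_ne a 0 with rfl | ha
    · obtain rfl : b = 0 := abs_nonpos_iff.mp (by simpa using hsmall)
      simp [zero_rpow hq.ne']
    have ha' : 0 < |a| := abs_pos.mpr ha
    have hba : |1 + b / a| ^ q - 1 ∈ Set.Icc (-ε) ε := by
      have hlt : dist (b / a) 0 < δ := by
        rw [dist_zero_right, norm_div, Real.norm_eq_abs, Real.norm_eq_abs, div_lt_iff₀ ha']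
        nlinarith
      have := hδε hlt
      rw [add_zero, abs_one, Real.one_rpow, Real.dist_eq] at this
      exact ⟨by linarith [abs_lt.mp this], by linarith [abs_lt.mp this]⟩
    have hab : |a + b| ^ q = |a| ^ q * |1 + b / a| ^ q := by
      rw [← mul_rpow (abs_nonneg _) (abs_nonneg _), ← abs_mul, mul_add, mul_div_cancel₀ _ ha,
        mul_one]
    have haq : 0 < |a| ^ q := by positivity
    have hbq : 0 ≤ ((2 / δ + 1) ^ q + (2 / δ) ^ q) * |b| ^ q := by positivity
    rw [hab, abs_le]
    constructor <;> nlinarith [hba.1, hba.2]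
  · have ha : |a| ≤ 2 / δ * |b| := by
      rw [div_mul_eq_mul_div, le_div_iff₀ hδ]
      linarith
    have hab : |a + b| ≤ (2 / δ + 1) * |b| := (abs_add_le a b).trans (by linarith)
    have hab_q : 0 ≤ |a + b| ^ q := by positivity
    have ha_q : 0 ≤ |a| ^ q := by positivity
    calc |(|a + b| ^ q - |a| ^ q)| ≤ |a + b| ^ q + |a| ^ q :=
          abs_sub_le_iff.mpr ⟨by linarith, by linarith⟩
      _ ≤ ((2 / δ + 1) * |b|) ^ q + (2 / δ * |b|) ^ q := by gcongr
      _ = ((2 / δ + 1) ^ q + (2 / δ) ^ q) * |b| ^ q := by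
          rw [mul_rpow (by positivity) (abs_nonneg b), mul_rpow (by positivity) (abs_nonneg b)]
          ring
      _ ≤ ε * |a| ^ q + ((2 / δ + 1) ^ q + (2 / δ) ^ q) * |b| ^ q :=
          le_add_of_nonneg_left (by positivity)

lemma exists_abs_rpow_add_sub_sub_rpow_le {q r : ℝ} (hq : 0 < q) (hqr : q ≤ r) {ε : ℝ}
    (hε : 0 < ε) :
    ∃ C, ∀ a b : ℝ, |(|a + b| ^ q - |a| ^ q - |b| ^ q)| ^ (r / q) ≤ ε * |a| ^ r + C * |b| ^ r := by
  set p := r / q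
  have hp : 1 ≤ p := (one_le_div hq).mpr hqr
  set ε₀ := (ε / 2 ^ (p - 1)) ^ p⁻¹
  have hε₀ : 0 < ε₀ := by positivity
  have hε₀p : ε₀ ^ p = ε / 2 ^ (p - 1) := rpow_inv_rpow (by positivity) (by positivity)
  have hpow : ∀ c x : ℝ, 0 ≤ c → (c * |x| ^ q) ^ p = c ^ p * |x| ^ r := fun c x hc => by
    rw [mul_rpow hc (by positivity), ← rpow_mul (abs_nonneg x), mul_div_cancel₀ r hq.ne']
  obtain ⟨C, hC, hbound⟩ := exists_abs_rpow_add_sub_rpow_le hq hε₀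
  refine ⟨2 ^ (p - 1) * (C + 1) ^ p, fun a b => ?_⟩
  calc |(|a + b| ^ q - |a| ^ q - |b| ^ q)| ^ p
      ≤ (ε₀ * |a| ^ q + (C + 1) * |b| ^ q) ^ p := by
        gcongr
        calc |(|a + b| ^ q - |a| ^ q - |b| ^ q)|
            ≤ |(|a + b| ^ q - |a| ^ q)| + |(|b| ^ q)| := abs_sub _ _
          _ ≤ ε₀ * |a| ^ q + (C + 1) * |b| ^ q := by
              rw [abs_of_nonneg (by positivity : (0 : ℝ) ≤ |b| ^ q)]
              linarith [hbound a b]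
    _ ≤ 2 ^ (p - 1) * ((ε₀ * |a| ^ q) ^ p + ((C + 1) * |b| ^ q) ^ p) :=
        rpow_add_le_mul_rpow_add_rpow (by positivity) (by positivity) hp
    _ = ε * |a| ^ r + 2 ^ (p - 1) * (C + 1) ^ p * |b| ^ r := by
        rw [hpow _ _ hε₀.le, hpow _ _ (by positivity), hε₀p]
        field_simp

namespace MeasureTheory

variable {α E : Type*} [MeasurableSpace α] {μ : Measure α} [NormedAddCommGroup E]

lemma MemLp.integrable_norm_rpow_ofReal {f : α → E} {r : ℝ} (hr : 0 < r)
    (hf : MemLp f (ENNReal.ofReal r) μ) : Integrable (fun x => ‖f x‖ ^ r) μ := by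
  simpa [ENNReal.toReal_ofReal hr.le] using
    hf.integrable_norm_rpow (by simpa using hr) ENNReal.ofReal_ne_top

lemma integral_norm_rpow_le_of_eLpNorm_le {f : α → E} {r : ℝ} (hr : 0 < r) {C : ℝ≥0∞}
    (hC : C ≠ ∞) (hf : MemLp f (ENNReal.ofReal r) μ)
    (hfC : eLpNorm f (ENNReal.ofReal r) μ ≤ C) :
    ∫ x, ‖f x‖ ^ r ∂μ ≤ C.toReal ^ r := by
  have hI : 0 ≤ ∫ x, ‖f x‖ ^ r ∂μ := integral_nonneg fun x => by positivity
  rw [hf.eLpNorm_eq_integral_rpow_norm (by simpa using hr) ENNReal.ofReal_ne_top,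
    ENNReal.toReal_ofReal hr.le, ENNReal.ofReal_le_iff_le_toReal hC] at hfC
  calc ∫ x, ‖f x‖ ^ r ∂μ = ((∫ x, ‖f x‖ ^ r ∂μ) ^ r⁻¹) ^ r := (rpow_inv_rpow hI hr.ne').symm
    _ ≤ C.toReal ^ r := by gcongr

variable {F G : ℕ → α → ℝ} {H : α → ℝ} {M : ℝ}

/-- Dominated convergence applied to `(F n - ε G n)⁺ ≤ C |H|`. -/
lemma eventually_integral_le_mul_add (hF_meas : ∀ n, AEStronglyMeasurable (F n) μ)
    (hF_nonneg : ∀ n x, 0 ≤ F n x) (hF_lim : ∀ᵐ x ∂μ, Tendsto (F · x) atTop (𝓝 0))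
    (hG : ∀ n, Integrable (G n) μ) (hG_nonneg : ∀ n x, 0 ≤ G n x)
    (hG_le : ∀ n, ∫ x, G n x ∂μ ≤ M) (hH : Integrable H μ) {ε C : ℝ} (hε : 0 ≤ ε)
    (hFGH : ∀ n x, F n x ≤ ε * G n x + C * H x) {η : ℝ} (hη : 0 < η) :
    ∀ᶠ n in atTop, ∫ x, F n x ∂μ < ε * M + η := by
  set h : ℕ → α → ℝ := fun n x => max (F n x - ε * G n x) 0
  have hh_meas : ∀ n, AEStronglyMeasurable (h n) μ := fun n =>
    ((hF_meas n).sub ((hG n).aestronglyMeasurable.const_mul ε)).sup aestronglyMeasurable_const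
  have hh_le : ∀ n, ∀ᵐ x ∂μ, ‖h n x‖ ≤ ‖C * H x‖ := fun n => .of_forall fun x => by
    rw [Real.norm_of_nonneg (le_max_right _ _), Real.norm_eq_abs]
    exact max_le (by linarith [hFGH n x, le_abs_self (C * H x)]) (abs_nonneg _)
  have hh_lim : ∀ᵐ x ∂μ, Tendsto (h · x) atTop (𝓝 0) := by
    filter_upwards [hF_lim] with x hx
    refine tendsto_of_tendsto_of_tendsto_of_le_of_le tendsto_const_nhds hx
      (fun n => le_max_right _ _) (fun n => max_le ?_ (hF_nonneg n x))
    linarith [mul_nonneg hε (hG_nonneg n x)]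
  have hh_int : ∀ n, Integrable (h n) μ := fun n => hH.norm.const_mul ‖C‖ |>.mono' (hh_meas n)
    (by simpa only [norm_mul] using hh_le n)
  have hF_le : ∀ n, ∫ x, F n x ∂μ ≤ ∫ x, h n x ∂μ + ε * M := fun n => by
    have hsum : Integrable (fun x => h n x + ε * G n x) μ := (hh_int n).add ((hG n).const_mul ε)
    have hF_le_sum : ∀ x, F n x ≤ h n x + ε * G n x := fun x => by
      linarith [le_max_left (F n x - ε * G n x) 0]
    have hF_int : Integrable (F n) μ := hsum.mono' (hF_meas n) (.of_forall fun x => by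
      rw [Real.norm_of_nonneg (hF_nonneg n x)]; exact hF_le_sum x)
    calc ∫ x, F n x ∂μ ≤ ∫ x, (h n x + ε * G n x) ∂μ := integral_mono hF_int hsum hF_le_sum
      _ = ∫ x, h n x ∂μ + ε * ∫ x, G n x ∂μ := by
          rw [integral_add (hh_int n) ((hG n).const_mul ε), integral_const_mul]
      _ ≤ ∫ x, h n x ∂μ + ε * M := by gcongr; exact hG_le n
  have hDCT : Tendsto (fun n => ∫ x, h n x ∂μ) atTop (𝓝 0) := by
    simpa using tendsto_integral_of_dominated_convergence _ hh_meas (hH.const_mul C).norm hh_le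
      hh_lim
  filter_upwards [hDCT.eventually_lt_const hη] with n hn
  linarith [hF_le n]

theorem tendsto_integral_of_forall_le_mul_add (hF_meas : ∀ n, AEStronglyMeasurable (F n) μ)
    (hF_nonneg : ∀ n x, 0 ≤ F n x) (hF_lim : ∀ᵐ x ∂μ, Tendsto (F · x) atTop (𝓝 0))
    (hG : ∀ n, Integrable (G n) μ) (hG_nonneg : ∀ n x, 0 ≤ G n x)
    (hG_le : ∀ n, ∫ x, G n x ∂μ ≤ M) (hH : Integrable H μ)
    (hFGH : ∀ ε > 0, ∃ C, ∀ n x, F n x ≤ ε * G n x + C * H x) :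
    Tendsto (fun n => ∫ x, F n x ∂μ) atTop (𝓝 0) := by
  have hM : 0 ≤ M := (integral_nonneg (hG_nonneg 0)).trans (hG_le 0)
  refine tendsto_order.mpr ⟨fun a ha => .of_forall fun n =>
    ha.trans_le (integral_nonneg (hF_nonneg n)), fun a ha => ?_⟩
  set ε := a / (2 * (M + 1))
  have hε : 0 < ε := by positivity
  have hεM : ε * M ≤ a / 2 := by
    rw [div_mul_eq_mul_div, div_le_div_iff₀ (by positivity) two_pos]
    nlinarith
  obtain ⟨C, hC⟩ := hFGH ε hε
  filter_upwards [eventually_integral_le_mul_add hF_meas hF_nonneg hF_lim hG hG_nonneg hG_le hH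
    hε.le hC (half_pos ha)] with n hn
  linarith

end MeasureTheory

theorem brezis_lieb_variant_general (N : ℕ) (Ω : Set (Euc N))
    (r : ℝ) (hr : 1 ≤ r) (u : ℕ → Euc N → ℝ) (v : Euc N → ℝ)
    (hmem : ∀ n, MemLp (u n) (ENNReal.ofReal r) (volume.restrict Ω))
    (hbdd : ∃ C : ℝ≥0∞, C < ⊤ ∧ ∀ n, eLpNorm (u n) (ENNReal.ofReal r) (volume.restrict Ω) ≤ C)
    (hae : ∀ᵐ x ∂(volume.restrict Ω), Tendsto (fun n => u n x) atTop (𝓝 (v x))) :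
    ∀ q : ℝ, 1 ≤ q → q ≤ r →
      Tendsto (fun n =>
          ∫ x in Ω, (abs (|u n x| ^ q - |u n x - v x| ^ q - |v x| ^ q)) ^ (r / q))
        atTop (𝓝 0) := by
  intro q hq hqr
  obtain ⟨C, hC, hu_le⟩ := hbdd
  have hr0 : 0 < r := by linarith
  have hq0 : 0 < q := by linarith
  have hu_meas n := (hmem n).aestronglyMeasurable
  have hv_le := Lp.eLpNorm_le_of_ae_tendsto (.of_forall hu_le) hu_meas hae
  have hv : MemLp v (ENNReal.ofReal r) (volume.restrict Ω) :=
    ⟨aestronglyMeasurable_of_tendsto_ae atTop hu_meas hae, hv_le.trans_lt hC⟩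
  have hdiff_le n : eLpNorm (u n - v) (ENNReal.ofReal r) (volume.restrict Ω) ≤ C + C :=
    (eLpNorm_sub_le (hu_meas n) hv.1 (by simpa using hr)).trans (add_le_add (hu_le n) hv_le)
  have hF_meas n : AEStronglyMeasurable
      (fun x => |(|u n x| ^ q - |u n x - v x| ^ q - |v x| ^ q)| ^ (r / q)) (volume.restrict Ω) := by
    have := hu_meas n
    have := hv.1
    fun_prop (disch := positivity)
  have hF_lim : ∀ᵐ x ∂(volume.restrict Ω),
      Tendsto (fun n => |(|u n x| ^ q - |u n x - v x| ^ q - |v x| ^ q)| ^ (r / q)) atTop (𝓝 0) := by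
    filter_upwards [hae] with x hx
    have hcont : Continuous fun s => |(|s| ^ q - |s - v x| ^ q - |v x| ^ q)| ^ (r / q) := by
      fun_prop (disch := positivity)
    simpa [Function.comp_def, zero_rpow hq0.ne', zero_rpow (div_pos hr0 hq0).ne'] using
      (hcont.tendsto (v x)).comp hx
  refine tendsto_integral_of_forall_le_mul_add (G := fun n x => |u n x - v x| ^ r)
    (H := fun x => |v x| ^ r) (M := (C + C).toReal ^ r) hF_meas (fun n x => by positivity)
    hF_lim (fun n => ((hmem n).sub hv).integrable_norm_rpow_ofReal hr0)
    (fun n x => by positivity)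
    (fun n => integral_norm_rpow_le_of_eLpNorm_le hr0 (by finiteness) ((hmem n).sub hv)
      (hdiff_le n))
    (hv.integrable_norm_rpow_ofReal hr0) fun ε hε => ?_
  obtain ⟨K, hK⟩ := exists_abs_rpow_add_sub_sub_rpow_le hq0 hqr hε
  exact ⟨K, fun n x => by simpa using hK (u n x - v x) (v x)⟩

theorem brezis_lieb_variant (N : ℕ) (hN : 1 ≤ N) (Ω : Set (Euc N)) (hΩ : IsOpen Ω)
    (r : ℝ) (hr : 1 ≤ r) (u : ℕ → Euc N → ℝ) (v : Euc N → ℝ)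
    (hmem : ∀ n, MemLp (u n) (ENNReal.ofReal r) (volume.restrict Ω))
    (hbdd : ∃ C : ℝ≥0∞, C < ⊤ ∧ ∀ n, eLpNorm (u n) (ENNReal.ofReal r) (volume.restrict Ω) ≤ C)
    (hae : ∀ᵐ x ∂(volume.restrict Ω), Tendsto (fun n => u n x) atTop (𝓝 (v x))) :
    ∀ q : ℝ, 1 ≤ q → q ≤ r →
      Tendsto (fun n =>
          ∫ x in Ω, (abs (|u n x| ^ q - |u n x - v x| ^ q - |v x| ^ q)) ^ (r / q))
        atTop (𝓝 0) :=
  brezis_lieb_variant_general N Ω r hr u v hmem hbdd hae
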